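/- Let νᵢ⁺, νᵢ⁻ (i = 1,…,6) be the twelve unit vectors defined by ν₁⁺ = (√3/2,0,1/2), ν₂⁺ = (√3/2,0,−1/2), ν₁⁻ = ν₂⁺, ν₂⁻ = ν₁⁺, and νᵢ^± = R(ν_{i−2}^±) for i ≥ 3, where R is rotation by 2π/3 about the x₂-axis. Then the only subsets J ⊆ {1,…,6} containing 1 with Σ_{j∈J} νⱼ⁺ = 0 and Σ_{j∈J} νⱼ⁻ = 0 are J = {1,3,5} and J = {1,2,3,4,5,6}. -/

import Mathlib

/-!
Both families lie in the `x₁x₃`-plane and every vector has the form `(√3/2 · a, 0, b/2)` with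
`a, b ∈ ℤ`. Since `√3 ≠ 0`, a sum of such vectors vanishes iff both integer coordinate sums
vanish, so the claim becomes a statement about four integer linear equations on the indicator
vector of `J`, which is checked over the 32 subsets of `{1, …, 6}` containing `1`.
-/

open Real Matrix

theorem cos_two_pi_div_three : cos (2 * π / 3) = -(1 / 2) := by
  rw [show 2 * π / 3 = π - π / 3 by ring, cos_pi_sub, cos_pi_div_three]

theorem sin_two_pi_div_three : sin (2 * π / 3) = √3 / 2 := by
  rw [show 2 * π / 3 = π - π / 3 by ring, sin_pi_sub, sin_pi_div_three]

noncomputable def hexVec (a b : ℤ) : Fin 3 → ℝ := ![√3 / 2 * a, 0, b / 2]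

theorem hexVec_add (a b c d : ℤ) : hexVec a b + hexVec c d = hexVec (a + c) (b + d) := by
  ext i; fin_cases i <;> simp [hexVec] <;> ring

theorem hexVec_zero : hexVec 0 0 = 0 := by
  ext i; fin_cases i <;> simp [hexVec]

theorem hexVec_eq_zero_iff {a b : ℤ} : hexVec a b = 0 ↔ a = 0 ∧ b = 0 := by
  refine ⟨fun h ↦ ?_, fun ⟨ha, hb⟩ ↦ ha ▸ hb ▸ hexVec_zero⟩
  simpa [hexVec] using And.intro (congrFun h 0) (congrFun h 2)

theorem sum_hexVec {ι : Type*} (J : Finset ι) (a b : ι → ℤ) :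
    ∑ j ∈ J, hexVec (a j) (b j) = hexVec (∑ j ∈ J, a j) (∑ j ∈ J, b j) := by
  classical
  induction J using Finset.induction_on with
  | empty => simp [hexVec_zero]
  | insert j J hj ih =>
    rw [Finset.sum_insert hj, ih, hexVec_add, Finset.sum_insert hj, Finset.sum_insert hj]

theorem sum_hexVec_eq_zero_iff {ι : Type*} (J : Finset ι) (a b : ι → ℤ) :
    ∑ j ∈ J, hexVec (a j) (b j) = 0 ↔ ∑ j ∈ J, a j = 0 ∧ ∑ j ∈ J, b j = 0 := by
  rw [sum_hexVec, hexVec_eq_zero_iff]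

noncomputable def rotX₂ (θ : ℝ) : Matrix (Fin 3) (Fin 3) ℝ :=
  !![cos θ, 0, -sin θ; 0, 1, 0; sin θ, 0, cos θ]

theorem rotX₂_mulVec (θ x z : ℝ) :
    rotX₂ θ *ᵥ ![x, 0, z] = ![cos θ * x - sin θ * z, 0, sin θ * x + cos θ * z] := by
  ext i; fin_cases i <;> simp [rotX₂, mulVec, dotProduct, Fin.sum_univ_three]; ring

theorem rotX₂_mulVec_hexVec {a b c d : ℤ} (hc : a + b = -2 * c) (hd : 3 * a - b = 2 * d) :
    rotX₂ (2 * π / 3) *ᵥ hexVec a b = hexVec c d := by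
  have hc' : (a : ℝ) + b = -2 * c := by exact_mod_cast hc
  have hd' : 3 * (a : ℝ) - b = 2 * d := by exact_mod_cast hd
  have h3 : √3 * √3 = 3 := mul_self_sqrt (by norm_num)
  rw [hexVec, rotX₂_mulVec, cos_two_pi_div_three, sin_two_pi_div_three, hexVec]
  ext i
  fin_cases i <;> simp
  · linear_combination (-√3 / 4) * hc'
  · linear_combination (a / 4) * h3 + hd' / 4

theorem hexVec_one_one : hexVec 1 1 = ![√3 / 2, 0, 1 / 2] := by
  simp [hexVec]

theorem hexVec_one_neg_one : hexVec 1 (-1) = ![√3 / 2, 0, -(1 / 2)] := by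
  simp [hexVec, neg_div]

theorem coefficient_sums_eq_zero_iff : ∀ J : Finset (Fin 6), 0 ∈ J →
    ((∑ j ∈ J, ![1, 1, -1, 0, 0, -1] j = (0 : ℤ) ∧ ∑ j ∈ J, ![1, -1, 1, 2, -2, -1] j = (0 : ℤ)) ∧
      (∑ j ∈ J, ![1, 1, 0, -1, -1, 0] j = (0 : ℤ) ∧ ∑ j ∈ J, ![-1, 1, 2, 1, -1, -2] j = (0 : ℤ)) ↔
      J = {0, 2, 4} ∨ J = Finset.univ) := by
  decide

theorem stmt_14 (R : Matrix (Fin 3) (Fin 3) ℝ)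
    (hR : R = !![Real.cos (2 * π / 3), 0, -Real.sin (2 * π / 3);
                 0, 1, 0;
                 Real.sin (2 * π / 3), 0, Real.cos (2 * π / 3)])
    (νp νm : Fin 6 → Fin 3 → ℝ)
    (hp1 : νp 0 = ![Real.sqrt 3 / 2, 0, 1 / 2])
    (hp2 : νp 1 = ![Real.sqrt 3 / 2, 0, -(1 / 2)])
    (hm1 : νm 0 = ![Real.sqrt 3 / 2, 0, -(1 / 2)])
    (hm2 : νm 1 = ![Real.sqrt 3 / 2, 0, 1 / 2])
    (hp3 : νp 2 = R.mulVec (νp 0)) (hp4 : νp 3 = R.mulVec (νp 1))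
    (hp5 : νp 4 = R.mulVec (νp 2)) (hp6 : νp 5 = R.mulVec (νp 3))
    (hm3 : νm 2 = R.mulVec (νm 0)) (hm4 : νm 3 = R.mulVec (νm 1))
    (hm5 : νm 4 = R.mulVec (νm 2)) (hm6 : νm 5 = R.mulVec (νm 3)) :
    ∀ J : Finset (Fin 6), 0 ∈ J →
      ((∑ j ∈ J, νp j = 0 ∧ ∑ j ∈ J, νm j = 0) ↔
        (J = {0, 2, 4} ∨ J = Finset.univ)) := by
  have rot {a b c d : ℤ} (hc : a + b = -2 * c) (hd : 3 * a - b = 2 * d) :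
      R *ᵥ hexVec a b = hexVec c d := by
    subst hR; exact rotX₂_mulVec_hexVec hc hd
  have p0 : νp 0 = hexVec 1 1 := hp1.trans hexVec_one_one.symm
  have p1 : νp 1 = hexVec 1 (-1) := hp2.trans hexVec_one_neg_one.symm
  have p2 : νp 2 = hexVec (-1) 1 := by rw [hp3, p0, rot] <;> norm_num
  have p3 : νp 3 = hexVec 0 2 := by rw [hp4, p1, rot] <;> norm_num
  have p4 : νp 4 = hexVec 0 (-2) := by rw [hp5, p2, rot] <;> norm_num
  have p5 : νp 5 = hexVec (-1) (-1) := by rw [hp6, p3, rot] <;> norm_num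
  have m0 : νm 0 = hexVec 1 (-1) := hm1.trans hexVec_one_neg_one.symm
  have m1 : νm 1 = hexVec 1 1 := hm2.trans hexVec_one_one.symm
  have m2 : νm 2 = hexVec 0 2 := by rw [hm3, m0, rot] <;> norm_num
  have m3 : νm 3 = hexVec (-1) 1 := by rw [hm4, m1, rot] <;> norm_num
  have m4 : νm 4 = hexVec (-1) (-1) := by rw [hm5, m2, rot] <;> norm_num
  have m5 : νm 5 = hexVec 0 (-2) := by rw [hm6, m3, rot] <;> norm_num
  have hp : νp = fun j ↦ hexVec (![1, 1, -1, 0, 0, -1] j) (![1, -1, 1, 2, -2, -1] j) := by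
    funext j; fin_cases j <;> assumption
  have hm : νm = fun j ↦ hexVec (![1, 1, 0, -1, -1, 0] j) (![-1, 1, 2, 1, -1, -2] j) := by
    funext j; fin_cases j <;> assumption
  intro J hJ
  rw [hp, hm, sum_hexVec_eq_zero_iff, sum_hexVec_eq_zero_iff]
  exact coefficient_sums_eq_zero_iff J hJ
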